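/- Hole-filling lemma for L^c_1: if the clause judgment Ψ ⊢ 𝒞[R] ≫ a is derivable in L^c_1 for a pseudo clause 𝒞 and residual R, then the residual judgment Ψ ⊢ R' is derivable, where R' is the instance of R obtained from the instantiations performed while focusing on 𝒞[R]. -/

import Mathlib

/-! ## First-order terms -/

/-- First-order terms: variables and function symbols (curried application). -/
inductive Tm : Type where
  | var : ℕ → Tm
  | fn  : ℕ → Tm
  | app : Tm → Tm → Tm

/-- A constant: a function symbol applied to no arguments. -/
def cst (c : ℕ) : Tm := .fn c

/-- Parallel substitution on terms. -/
def Tm.psubst (σ : ℕ → Tm) : Tm → Tm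
  | .var y => σ y
  | .fn f => .fn f
  | .app t s => .app (t.psubst σ) (s.psubst σ)

/-- The substitution [s/x]. -/
def sub1 (x : ℕ) (s : Tm) : ℕ → Tm := fun y => if y = x then s else .var y

/-- The simultaneous substitution [t⃗/x⃗]. -/
def simsub (xs : List ℕ) (ts : List Tm) : ℕ → Tm := fun y =>
  match (xs.zip ts).find? (fun q => q.1 = y) with
  | some q => q.2
  | none => .var y

/-- Adjust a substitution when passing under a binder for `x`:
the bound variable is left untouched. -/
def underBinder (σ : ℕ → Tm) (x : ℕ) : ℕ → Tm := fun y => if y = x then .var x else σ y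

/-- Free variables of a term. -/
def Tm.fvars : Tm → List ℕ
  | .var y => [y]
  | .fn _ => []
  | .app t s => t.fvars ++ s.fvars

/-- Function symbols occurring in a term. -/
def Tm.fns : Tm → List ℕ
  | .var _ => []
  | .fn f => [f]
  | .app t s => t.fns ++ s.fns

/-! ## Atoms -/

/-- Atoms: a predicate symbol applied to a list of terms, one at a time. -/
inductive Atm : Type where
  | pred : ℕ → Atm
  | app : Atm → Tm → Atm

def Atm.psubst (σ : ℕ → Tm) : Atm → Atm
  | .pred p => .pred p
  | .app a t => .app (a.psubst σ) (t.psubst σ)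

def Atm.fvars : Atm → List ℕ
  | .pred _ => []
  | .app a t => a.fvars ++ t.fvars

def Atm.fns : Atm → List ℕ
  | .pred _ => []
  | .app a t => a.fns ++ t.fns

/-- `a.apps ts` is the atom `a` applied to the further arguments `ts`. -/
def Atm.apps (a : Atm) (ts : List Tm) : Atm := ts.foldl .app a

/-! ## The source language L^s -/

/-- Formulas of L^s: atoms, implication, universal quantification. -/
inductive Fml : Type where
  | atm : Atm → Fml
  | imp : Fml → Fml → Fml
  | all : ℕ → Fml → Fml

def Fml.psubst (σ : ℕ → Tm) : Fml → Fml
  | .atm a => .atm (a.psubst σ)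
  | .imp A B => .imp (A.psubst σ) (B.psubst σ)
  | .all x A => .all x (A.psubst (underBinder σ x))

def Fml.fns : Fml → List ℕ
  | .atm a => a.fns
  | .imp A B => A.fns ++ B.fns
  | .all _ A => A.fns

/-- Function symbols of a program of L^s. -/
def fnsCtx (Γ : List Fml) : List ℕ := Γ.flatMap Fml.fns

mutual
/-- Uniform provability `Γ ⊢u A` in L^s. -/
inductive Unif : List Fml → Fml → Prop where
  | atm {Γ : List Fml} {A : Fml} {a : Atm} :
      A ∈ Γ → Imm Γ A a → Unif Γ (.atm a)
  | imp {Γ : List Fml} {A B : Fml} :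
      Unif (A :: Γ) B → Unif Γ (.imp A B)
  | all {Γ : List Fml} {x : ℕ} {A : Fml} (c : ℕ) :
      c ∉ fnsCtx Γ → c ∉ Fml.fns (.all x A) →
      Unif Γ (A.psubst (sub1 x (cst c))) → Unif Γ (.all x A)
/-- Immediate entailment `Γ ⊢ A ≫ a` in L^s. -/
inductive Imm : List Fml → Fml → Atm → Prop where
  | atm {Γ : List Fml} {a : Atm} : Imm Γ (.atm a) a
  | imp {Γ : List Fml} {A B : Fml} {a : Atm} :
      Imm Γ A a → Unif Γ B → Imm Γ (.imp B A) a
  | all {Γ : List Fml} {x : ℕ} {A : Fml} {a : Atm} (t : Tm) :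
      Imm Γ (A.psubst (sub1 x t)) a → Imm Γ (.all x A) a
end

/-! ## The target language L^c_1 -/

mutual
/-- Goals of L^c_1. -/
inductive Gl : Type where
  | atm : Atm → Gl
  | imp : Cl → Gl → Gl
  | all : ℕ → Gl → Gl
/-- Clauses of L^c_1 (and their instances): `R ⊃ p t⃗` or `∀x.C`. -/
inductive Cl : Type where
  | hd : Rs → ℕ → List Tm → Cl
  | all : ℕ → Cl → Cl
/-- Residuals of L^c_1 (and their instances): equalities, truth,
conjunction with a goal, conjunction with an equality, existential. -/
inductive Rs : Type where
  | eq : Tm → Tm → Rs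
  | tt : Rs
  | and : Rs → Gl → Rs
  | andE : Rs → Tm → Tm → Rs
  | ex : ℕ → Rs → Rs
end

mutual
def Gl.psubst (σ : ℕ → Tm) : Gl → Gl
  | .atm a => .atm (a.psubst σ)
  | .imp C G => .imp (C.psubst σ) (G.psubst σ)
  | .all x G => .all x (G.psubst (underBinder σ x))
def Cl.psubst (σ : ℕ → Tm) : Cl → Cl
  | .hd R p ts => .hd (R.psubst σ) p (ts.map (Tm.psubst σ))
  | .all x C => .all x (C.psubst (underBinder σ x))
def Rs.psubst (σ : ℕ → Tm) : Rs → Rs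
  | .eq t s => .eq (t.psubst σ) (s.psubst σ)
  | .tt => .tt
  | .and R G => .and (R.psubst σ) (G.psubst σ)
  | .andE R t s => .andE (R.psubst σ) (t.psubst σ) (s.psubst σ)
  | .ex x R => .ex x (R.psubst (underBinder σ x))
end

mutual
def Gl.fns : Gl → List ℕ
  | .atm a => a.fns
  | .imp C G => C.fns ++ G.fns
  | .all _ G => G.fns
def Cl.fns : Cl → List ℕ
  | .hd R _ ts => R.fns ++ ts.flatMap Tm.fns
  | .all _ C => C.fns
def Rs.fns : Rs → List ℕ
  | .eq t s => t.fns ++ s.fns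
  | .tt => []
  | .and R G => R.fns ++ G.fns
  | .andE R t s => R.fns ++ t.fns ++ s.fns
  | .ex _ R => R.fns
end

/-- Function symbols of a compiled program. -/
def fnsProg (Ψ : List Cl) : List ℕ := Ψ.flatMap Cl.fns

/-- The atom `p t⃗` corresponding to a clause head. -/
def Atm.ofHd (p : ℕ) (ts : List Tm) : Atm := Atm.apps (.pred p) ts

mutual
/-- `Ψ ⊢ G` : uniform provability of a goal in L^c_1. -/
inductive GSeq : List Cl → Gl → Prop where
  | atm {Ψ : List Cl} {C : Cl} {a : Atm} :
      C ∈ Ψ → CSeq Ψ C a → GSeq Ψ (.atm a)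
  | imp {Ψ : List Cl} {C : Cl} {G : Gl} :
      GSeq (C :: Ψ) G → GSeq Ψ (.imp C G)
  | all {Ψ : List Cl} {x : ℕ} {G : Gl} (c : ℕ) :
      c ∉ fnsProg Ψ → c ∉ Gl.fns (.all x G) →
      GSeq Ψ (G.psubst (sub1 x (cst c))) → GSeq Ψ (.all x G)
/-- `Ψ ⊢ C ≫ a` : the atom `a` is immediately entailed by the clause `C`. -/
inductive CSeq : List Cl → Cl → Atm → Prop where
  | imp {Ψ : List Cl} {R : Rs} {p : ℕ} {ts : List Tm} :
      RSeq Ψ R → CSeq Ψ (.hd R p ts) (Atm.ofHd p ts)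
  | all {Ψ : List Cl} {x : ℕ} {C : Cl} {a : Atm} (t : Tm) :
      CSeq Ψ (C.psubst (sub1 x t)) a → CSeq Ψ (.all x C) a
/-- `Ψ ⊢ R` : uniform provability of a residual in L^c_1. -/
inductive RSeq : List Cl → Rs → Prop where
  | eq {Ψ : List Cl} {t : Tm} : RSeq Ψ (.eq t t)
  | tt {Ψ : List Cl} : RSeq Ψ .tt
  | and {Ψ : List Cl} {R : Rs} {G : Gl} :
      RSeq Ψ R → GSeq Ψ G → RSeq Ψ (.and R G)
  | andE {Ψ : List Cl} {R : Rs} {t : Tm} :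
      RSeq Ψ R → RSeq Ψ (.andE R t t)
  | ex {Ψ : List Cl} {x : ℕ} {R : Rs} (t : Tm) :
      RSeq Ψ (R.psubst (sub1 x t)) → RSeq Ψ (.ex x R)
end

/-! ## Pseudo clauses and compilation -/

/-- Pseudo clauses: `□ ⊃ p x⃗` or `∀x.𝒞`. -/
inductive PCl : Type where
  | hd : ℕ → List ℕ → PCl
  | all : ℕ → PCl → PCl

/-- `𝒞.fill R` replaces the hole of `𝒞` by `R` (capture is allowed). -/
def PCl.fill : PCl → Rs → Cl
  | .hd p xs, R => .hd R p (xs.map Tm.var)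
  | .all x 𝒞, R => .all x (𝒞.fill R)

/-- The list of variables bound by the leading quantifiers of a pseudo clause,
outermost first. -/
def PCl.vars : PCl → List ℕ
  | .hd _ _ => []
  | .all x 𝒞 => x :: 𝒞.vars

/-- Head compilation `x⃗ ▹ a ↝ 𝒞 / E` of L^c_1. -/
inductive HComp : List ℕ → Atm → PCl → Rs → Prop where
  | p {xs : List ℕ} {p : ℕ} :
      xs.Nodup → HComp xs (.pred p) (.hd p xs) .tt
  | pt {xs : List ℕ} {a : Atm} {t : Tm} {𝒞 : PCl} {E : Rs} (x : ℕ) :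
      x ∉ xs → x ∉ Atm.fvars (.app a t) →
      HComp (x :: xs) a 𝒞 E →
      HComp xs (.app a t) (.all x 𝒞) (.andE E (.var x) t)

mutual
/-- Clause compilation `A ↝ 𝒞 / R` of L^c_1. -/
inductive CComp : Fml → PCl → Rs → Prop where
  | atm {a : Atm} {𝒞 : PCl} {E : Rs} :
      HComp [] a 𝒞 E → CComp (.atm a) 𝒞 E
  | imp {A B : Fml} {𝒞 : PCl} {R : Rs} {G : Gl} :
      GComp A G → CComp B 𝒞 R → CComp (.imp A B) 𝒞 (.and R G)
  | all {x : ℕ} {A : Fml} {𝒞 : PCl} {R : Rs} :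
      CComp A 𝒞 R → CComp (.all x A) 𝒞 (.ex x R)
/-- Goal compilation `A ↝ G` of L^c_1. -/
inductive GComp : Fml → Gl → Prop where
  | atm {a : Atm} : GComp (.atm a) (.atm a)
  | imp {A B : Fml} {𝒞 : PCl} {R : Rs} {G : Gl} :
      CComp A 𝒞 R → GComp B G → GComp (.imp A B) (.imp (𝒞.fill R) G)
  | all {x : ℕ} {A : Fml} {G : Gl} :
      GComp A G → GComp (.all x A) (.all x G)
end

/-- Program compilation `Γ ↝ Ψ` of L^c_1. -/
inductive PComp : List Fml → List Cl → Prop where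
  | nil : PComp [] []
  | cons {Γ : List Fml} {Ψ : List Cl} {A : Fml} {𝒞 : PCl} {R : Rs} :
      PComp Γ Ψ → CComp A 𝒞 R → PComp (A :: Γ) (𝒞.fill R :: Ψ)

/-! Focusing on `∀x.C` instantiates `x` by some term `t`. Pushed through the remaining
quantifiers of `C` down to its residual, `[t/x]` still acts as a single substitution
`[t'/x]`, with `t' = t`, or `t' = x` when `x` is bound again further in. So the lemma holds
for every clause, with the residual and the bound variables read off the clause itself; this
generalisation is needed because instantiation does not preserve the shape of a filled
pseudo clause (its head variables become terms). -/

def Cl.vars : Cl → List ℕ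
  | .hd _ _ _ => []
  | .all x C => x :: C.vars

def Cl.residual : Cl → Rs
  | .hd R _ _ => R
  | .all _ C => C.residual

theorem foldl_underBinder_apply (vs : List ℕ) (σ : ℕ → Tm) (y : ℕ) :
    vs.foldl underBinder σ y = if y ∈ vs then .var y else σ y := by
  induction vs generalizing σ with
  | nil => simp
  | cons z zs ih =>
    simp only [List.foldl_cons, ih, underBinder, List.mem_cons]
    split_ifs <;> simp_all

theorem foldl_underBinder_sub1 (vs : List ℕ) (x : ℕ) (t : Tm) :
    vs.foldl underBinder (sub1 x t) = sub1 x (if x ∈ vs then .var x else t) := by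
  funext y
  rw [foldl_underBinder_apply]
  unfold sub1
  split_ifs <;> simp_all

theorem Cl.vars_psubst : (C : Cl) → (σ : ℕ → Tm) → (C.psubst σ).vars = C.vars
  | .hd .., _ => rfl
  | .all x C, σ => by simp [Cl.psubst, Cl.vars, C.vars_psubst]

theorem Cl.residual_psubst : (C : Cl) → (σ : ℕ → Tm) →
    (C.psubst σ).residual = C.residual.psubst (C.vars.foldl underBinder σ)
  | .hd .., _ => rfl
  | .all x C, σ => by simp [Cl.psubst, Cl.vars, Cl.residual, C.residual_psubst]

theorem PCl.vars_fill (𝒞 : PCl) (R : Rs) : (𝒞.fill R).vars = 𝒞.vars := by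
  induction 𝒞 <;> simp_all [PCl.fill, PCl.vars, Cl.vars]

theorem PCl.residual_fill (𝒞 : PCl) (R : Rs) : (𝒞.fill R).residual = R := by
  induction 𝒞 <;> simp_all [PCl.fill, Cl.residual]

theorem CSeq.exists_rSeq_residual {Ψ : List Cl} {a : Atm} : {C : Cl} → CSeq Ψ C a →
    ∃ ts : List Tm, ts.length = C.vars.length ∧
      RSeq Ψ ((C.vars.zip ts).foldl (fun R' xt => R'.psubst (sub1 xt.1 xt.2)) C.residual)
  | _, .imp hR => ⟨[], rfl, hR⟩
  | .all x C, .all t hC => by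
    obtain ⟨ts, hlen, hR⟩ := hC.exists_rSeq_residual
    rw [Cl.vars_psubst] at hlen hR
    rw [Cl.residual_psubst, foldl_underBinder_sub1] at hR
    exact ⟨_ :: ts, by simp [Cl.vars, hlen], by simpa [Cl.vars, Cl.residual] using hR⟩

/-- If `Ψ ⊢ 𝒞[R] ≫ a` is derivable, then `Ψ ⊢ R'` is derivable, where `R'` is the
instance of `R` obtained from the instantiations performed while focusing on `𝒞[R]`
(one instantiating term per leading quantifier of `𝒞`, applied outermost first). -/
theorem hole_filling_lemma_Lc1 {Ψ : List Cl} {𝒞 : PCl} {R : Rs} {a : Atm}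
    (h : CSeq Ψ (𝒞.fill R) a) :
    ∃ ts : List Tm, ts.length = 𝒞.vars.length ∧
      RSeq Ψ ((𝒞.vars.zip ts).foldl (fun R' xt => R'.psubst (sub1 xt.1 xt.2)) R) := by
  simpa only [PCl.vars_fill, PCl.residual_fill] using h.exists_rSeq_residual
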